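/- arXiv:1307.0168 — 3 statements merged into one kernel-verified Lean document; each statement's English description precedes it below -/
import Mathlib

section
/- Let G be a non-complete simple graph on n vertices with clique number r (the size of a largest clique). Then r ≥ n/(n - α(G)), where α(G) is the algebraic connectivity of G. -/
open SimpleGraph Matrix BigOperators

/-- The algebraic connectivity of a graph on a finite vertex set: the second-smallest
Laplacian eigenvalue, characterized as the infimum of Rayleigh quotients of the
Laplacian over nonzero vectors orthogonal to the all-ones vector. -/
noncomputable def algConn {V : Type*} [Fintype V] (G : SimpleGraph V) : ℝ :=
  letI := Classical.decEq V
  letI := Classical.decRel G.Adj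
  sInf { a : ℝ | ∃ x : V → ℝ, x ≠ 0 ∧ ∑ v, x v = 0 ∧
    a = (x ⬝ᵥ (G.lapMatrix ℝ).mulVec x) / (x ⬝ᵥ x) }

/-!
Let `s` be a maximum clique, `r = #s`, and test the Rayleigh quotient on the centred indicator
`x = 1_{sᶜ} - ((n - r) / n) 𝟙` of its complement. Shifting by a constant does not change
`xᵀ L x`, which therefore counts the edges between `s` and `sᶜ`. By maximality no outside
vertex is adjacent to all of `s`, so `xᵀ L x ≤ (n - r)(r - 1)`, while `‖x‖² = r (n - r) / n`.
Hence `α(G) ≤ n (r - 1) / r`.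
-/

open Finset

namespace Finset

variable {V : Type*} [Fintype V] [DecidableEq V]

noncomputable def centeredIndicator (t : Finset V) : V → ℝ :=
  (fun v => if v ∈ t then 1 else 0) - fun _ => (#t / Fintype.card V : ℝ)

lemma sum_centeredIndicator (t : Finset V) : ∑ v, t.centeredIndicator v = 0 := by
  rcases isEmpty_or_nonempty V with hV | hV
  · simp
  simp only [centeredIndicator, Pi.sub_apply, sum_sub_distrib, sum_boole, filter_mem_eq_inter,
    univ_inter, sum_const, card_univ, nsmul_eq_mul]
  field_simp
  ring

lemma centeredIndicator_dotProduct_self (t : Finset V) :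
    t.centeredIndicator ⬝ᵥ t.centeredIndicator =
      #t * (Fintype.card V - #t) / Fintype.card V := by
  rcases isEmpty_or_nonempty V with hV | hV
  · simp [Subsingleton.elim t ∅]
  set c : ℝ := #t / Fintype.card V with hc
  have hsq : ∀ v, t.centeredIndicator v * t.centeredIndicator v =
      (if v ∈ t then 1 else 0) * (1 - 2 * c) + c ^ 2 := by
    intro v
    simp only [centeredIndicator, Pi.sub_apply]
    split_ifs <;> ring
  simp only [dotProduct, hsq, sum_add_distrib, ← sum_mul, sum_boole, filter_mem_eq_inter,
    univ_inter, sum_const, card_univ, nsmul_eq_mul, hc]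
  field_simp
  ring

end Finset

namespace SimpleGraph

lemma nonempty_of_ne_top {V : Type*} {G : SimpleGraph V} (hG : G ≠ ⊤) : Nonempty V := by
  by_contra h
  rw [not_nonempty_iff] at h
  exact hG (SimpleGraph.ext <| funext h.elim)

variable {V : Type*} [Fintype V]

lemma one_le_cliqueNum (G : SimpleGraph V) [Nonempty V] : 1 ≤ G.cliqueNum := by
  have h : G.IsClique (({Classical.arbitrary V} : Finset V) : Set V) := by simp
  simpa using h.card_le_cliqueNum

section Laplacian

variable {G : SimpleGraph V} [DecidableEq V] [DecidableRel G.Adj]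

lemma IsMaximumClique.card_inter_neighborFinset_lt {s : Finset V} (hs : G.IsMaximumClique s)
    {v : V} (hv : v ∉ s) : #(s ∩ G.neighborFinset v) < #s := by
  refine (card_le_card inter_subset_left).lt_of_ne fun h => ?_
  have hsub : s ⊆ G.neighborFinset v :=
    inter_eq_left.mp (eq_of_subset_of_card_le inter_subset_left h.ge)
  have hle := hs.maximum (insert v s) <| by
    rw [coe_insert]
    exact hs.isClique.insert fun b hb _ => (mem_neighborFinset _ _ _).mp (hsub hb)
  rw [card_insert_of_notMem hv] at hle
  omega

variable (G)

lemma algConn_le_rayleigh {x : V → ℝ} (hx : x ≠ 0) (hsum : ∑ v, x v = 0) :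
    algConn G ≤ x ⬝ᵥ (G.lapMatrix ℝ *ᵥ x) / (x ⬝ᵥ x) := by
  unfold algConn
  refine (le_of_eq ?_).trans (csInf_le (s := {a | ∃ y : V → ℝ, y ≠ 0 ∧ ∑ v, y v = 0 ∧
    a = y ⬝ᵥ (G.lapMatrix ℝ *ᵥ y) / (y ⬝ᵥ y)}) ⟨0, ?_⟩ ⟨x, hx, hsum, rfl⟩)
  · congr!
  rintro _ ⟨y, -, -, rfl⟩
  exact div_nonneg ((G.posSemidef_lapMatrix ℝ).dotProduct_mulVec_nonneg y)
    (dotProduct_self_star_nonneg y)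

lemma dotProduct_lapMatrix_mulVec_sub_const (x : V → ℝ) (c : ℝ) :
    (x - fun _ => c) ⬝ᵥ (G.lapMatrix ℝ *ᵥ (x - fun _ => c)) = x ⬝ᵥ (G.lapMatrix ℝ *ᵥ x) := by
  simp_rw [← toLinearMap₂'_apply', lapMatrix_toLinearMap₂', Pi.sub_apply,
    sub_sub_sub_cancel_right]

lemma indicator_dotProduct_lapMatrix_mulVec_indicator (t : Finset V) :
    (fun v => if v ∈ t then (1 : ℝ) else 0) ⬝ᵥ
      (G.lapMatrix ℝ *ᵥ fun v => if v ∈ t then (1 : ℝ) else 0) =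
      ∑ v ∈ t, (#(G.neighborFinset v \ t) : ℝ) := by
  simp only [dotProduct, lapMatrix_mulVec_apply, ite_mul, one_mul, zero_mul, sum_ite_mem,
    univ_inter]
  refine sum_congr rfl fun v hv => ?_
  rw [if_pos hv, mul_one, ← cast_card, ← card_neighborFinset_eq_degree,
    ← card_sdiff_add_card_inter _ t]
  push_cast
  ring

variable {G}

lemma IsMaximumClique.compl_centeredIndicator_dotProduct_lapMatrix_mulVec_le {s : Finset V}
    (hs : G.IsMaximumClique s) :
    sᶜ.centeredIndicator ⬝ᵥ (G.lapMatrix ℝ *ᵥ sᶜ.centeredIndicator) ≤ #sᶜ * (#s - 1) := by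
  rw [centeredIndicator, dotProduct_lapMatrix_mulVec_sub_const,
    indicator_dotProduct_lapMatrix_mulVec_indicator]
  calc ∑ v ∈ sᶜ, (#(G.neighborFinset v \ sᶜ) : ℝ)
      = ∑ v ∈ sᶜ, (#(s ∩ G.neighborFinset v) : ℝ) := sum_congr rfl fun v _ => by
        rw [sdiff_compl, inf_eq_inter, inter_comm]
    _ ≤ ∑ v ∈ sᶜ, ((#s : ℝ) - 1) := sum_le_sum fun v hv => by
      rw [le_sub_iff_add_le]
      exact_mod_cast hs.card_inter_neighborFinset_lt (mem_compl.mp hv)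
    _ = #sᶜ * (#s - 1) := by rw [sum_const, nsmul_eq_mul]

lemma IsMaximumClique.algConn_mul_card_le {s : Finset V} (hs : G.IsMaximumClique s)
    (hG : G ≠ ⊤) : algConn G * #s ≤ Fintype.card V * (#s - 1) := by
  have : Nonempty V := nonempty_of_ne_top hG
  have hn : (0 : ℝ) < Fintype.card V := by exact_mod_cast Fintype.card_pos
  have hr : (0 : ℝ) < #s := by
    exact_mod_cast maximumClique_card_eq_cliqueNum s hs ▸ G.one_le_cliqueNum
  have hs_lt : #s < Fintype.card V := (card_lt_iff_ne_univ s).mpr fun h =>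
    hG (isClique_univ.mp (by simpa [h] using hs.isClique))
  have hk : (#sᶜ : ℝ) = Fintype.card V - #s := by
    rw [card_compl]; push_cast [hs_lt.le]; ring
  have hk_pos : (0 : ℝ) < #sᶜ := by rw [hk, sub_pos]; exact_mod_cast hs_lt
  have hnorm : sᶜ.centeredIndicator ⬝ᵥ sᶜ.centeredIndicator = #sᶜ * #s / Fintype.card V := by
    rw [centeredIndicator_dotProduct_self, hk]; ring
  have hnorm_pos : 0 < sᶜ.centeredIndicator ⬝ᵥ sᶜ.centeredIndicator := by
    rw [hnorm]; positivity
  have hx : sᶜ.centeredIndicator ≠ 0 := fun h => by simp [h] at hnorm_pos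
  have h := (G.algConn_le_rayleigh hx (sum_centeredIndicator _)).trans
    (div_le_div_of_nonneg_right hs.compl_centeredIndicator_dotProduct_lapMatrix_mulVec_le
      hnorm_pos.le)
  have hquot : (#sᶜ * (#s - 1) / (#sᶜ * #s / Fintype.card V) : ℝ) =
      Fintype.card V * (#s - 1) / #s := by
    field_simp
  rwa [hnorm, hquot, le_div_iff₀ hr] at h

end Laplacian

end SimpleGraph

theorem stmt5 {n r : ℕ} (G : SimpleGraph (Fin n)) (hnc : G ≠ ⊤)
    (hclique : G.cliqueNum = r) :
    (n : ℝ) / ((n : ℝ) - algConn G) ≤ (r : ℝ) := by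
  classical
  have : Nonempty (Fin n) := nonempty_of_ne_top hnc
  have hn : (0 : ℝ) < n := by exact_mod_cast Fin.pos_iff_nonempty.mpr this
  have hr : (1 : ℝ) ≤ r := by exact_mod_cast hclique ▸ G.one_le_cliqueNum
  obtain ⟨s, hs⟩ := G.maximumClique_exists
  have hα := hs.algConn_mul_card_le hnc
  rw [maximumClique_card_eq_cliqueNum s hs, hclique, Fintype.card_fin] at hα
  have hpos : 0 < (n : ℝ) - algConn G := by nlinarith
  rw [div_le_iff₀ hpos]
  nlinarith
end

section
/- For any family of graphs H with ψ(H) = min{χ(H) : H ∈ H} - 1 = r ≥ 2, let α(n, H) be the maximum algebraic connectivity over all graphs of order n containing no copy of any member of H. Then lim_{n→∞} α(n, H)/n = 1 - 1/ψ(H). -/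
open SimpleGraph Matrix BigOperators

/-!
Lower bound: the Turán graph `T(n, r)` is `r`-colourable, so it contains no member of the family.
On vectors orthogonal to `𝟙` its Laplacian form is that of `Kₙ`, namely `n ‖x‖²`, minus the forms
of the cliques on its parts, each at most `(part size) ‖x‖²`; hence `α(T(n, r)) ≥ (1 - 1/r) n - 1`.

Upper bound: the Rayleigh quotient of `n eᵥ - 𝟙` gives Fiedler's bound `α(G) ≤ n δ(G) / (n - 1)`.
A member of the family of chromatic number `r + 1` lies in a complete `(r + 1)`-partite graph with
equal parts, so by the minimum-degree Erdős–Stone theorem every graph avoiding it has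
`δ(G) < (1 - 1/r + ε) n` once `n` is large.
-/

open Finset Filter Topology

theorem Finset.sum_sum_sub_sq {ι : Type*} (s : Finset ι) (x : ι → ℝ) :
    ∑ i ∈ s, ∑ j ∈ s, (x i - x j) ^ 2 = 2 * #s * ∑ i ∈ s, x i ^ 2 - 2 * (∑ i ∈ s, x i) ^ 2 := by
  simp only [sub_sq, sum_add_distrib, sum_sub_distrib, sum_const, nsmul_eq_mul, ← mul_sum,
    ← sum_mul]
  ring

theorem Finset.sum_sum_ite_eq_sum_fiberwise {ι κ M : Type*} [Fintype ι] [Fintype κ]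
    [DecidableEq κ] [AddCommMonoid M] (c : ι → κ) (f : ι → ι → M) :
    ∑ i, ∑ j, (if c i = c j then f i j else 0) =
      ∑ k, ∑ i with c i = k, ∑ j with c j = k, f i j := by
  rw [← sum_fiberwise univ c]
  refine sum_congr rfl fun k _ => sum_congr rfl fun i hi => ?_
  rw [(mem_filter.mp hi).2, sum_filter]
  simp only [eq_comm]

theorem Fin.card_filter_val_mod_eq_le (n r k : ℕ) :
    #{v : Fin n | (v : ℕ) % r = k} ≤ n / r + 1 := by
  rw [← card_range (n / r + 1)]
  refine card_le_card_of_injOn (fun v => (v : ℕ) / r) (fun v _ => ?_) fun v hv w hw hvw => ?_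
  · simpa [Nat.lt_succ_iff] using Nat.div_le_div_right v.2.le
  · simp only [coe_filter, mem_univ, true_and, Set.mem_ofPred_eq] at hv hw
    have hv' := Nat.div_add_mod v r
    have hw' := Nat.div_add_mod w r
    exact Fin.ext (by rw [← hv', ← hw', show (v : ℕ) / r = w / r from hvw, hv, hw])

theorem tendsto_sSup_div_atTop {A : ℕ → Set ℝ} {L C : ℝ}
    (hlow : ∀ᶠ n in atTop, ∃ a ∈ A n, L * n - C ≤ a)
    (hup : ∀ b > L, ∀ᶠ n in atTop, ∀ a ∈ A n, a ≤ b * n) :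
    Tendsto (fun n : ℕ => sSup (A n) / n) atTop (𝓝 L) := by
  rw [tendsto_order]
  constructor
  · intro b hb
    have hlim : Tendsto (fun n : ℕ => L - C / n) atTop (𝓝 L) := by
      simpa using tendsto_const_nhds.sub (tendsto_const_div_atTop_nhds_zero_nat C)
    filter_upwards [hlim.eventually (eventually_gt_nhds hb), hlow, hup (L + 1) (by linarith),
      eventually_gt_atTop 0] with n hbn hlown hbdd hn
    obtain ⟨a, ha, hLa⟩ := hlown
    have hn' : (0 : ℝ) < n := by exact_mod_cast hn
    calc b < L - C / n := hbn
      _ = (L * n - C) / n := by field_simp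
      _ ≤ sSup (A n) / n := by
        gcongr
        exact hLa.trans (le_csSup ⟨_, hbdd⟩ ha)
  · intro b hb
    filter_upwards [hup ((L + b) / 2) (by linarith), hlow, eventually_gt_atTop 0]
      with n hbdd hlown hn
    obtain ⟨a, ha, -⟩ := hlown
    have hn' : (0 : ℝ) < n := by exact_mod_cast hn
    rw [div_lt_iff₀ hn']
    calc sSup (A n) ≤ (L + b) / 2 * n := csSup_le ⟨a, ha⟩ hbdd
      _ < b * n := by nlinarith

namespace SimpleGraph

section RayleighQuotient

variable {V : Type*} [Fintype V] [DecidableEq V] (G : SimpleGraph V) [DecidableRel G.Adj]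

def rayleighQuotients : Set ℝ :=
  { a | ∃ x : V → ℝ, x ≠ 0 ∧ ∑ v, x v = 0 ∧ a = (x ⬝ᵥ G.lapMatrix ℝ *ᵥ x) / (x ⬝ᵥ x) }

theorem algConn_eq_sInf_rayleighQuotients : algConn G = sInf G.rayleighQuotients := by
  unfold algConn rayleighQuotients
  congr!

theorem dotProduct_lapMatrix_mulVec (x : V → ℝ) :
    x ⬝ᵥ G.lapMatrix ℝ *ᵥ x = (∑ i, ∑ j, if G.Adj i j then (x i - x j) ^ 2 else 0) / 2 := by
  rw [← toLinearMap₂'_apply', lapMatrix_toLinearMap₂']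

theorem rayleighQuotients_bddBelow : BddBelow G.rayleighQuotients := by
  refine ⟨0, ?_⟩
  rintro _ ⟨x, -, -, rfl⟩
  refine div_nonneg ?_ (dotProduct_self_star_nonneg x)
  rw [dotProduct_lapMatrix_mulVec]
  exact div_nonneg (sum_nonneg fun i _ => sum_nonneg fun j _ => by split_ifs <;> positivity)
    zero_le_two

theorem lapMatrix_apply_self (v : V) : G.lapMatrix ℝ v v = G.degree v := by
  simp [lapMatrix, degMatrix]

theorem one_dotProduct_lapMatrix_col (v : V) :
    (fun _ => 1 : V → ℝ) ⬝ᵥ (G.lapMatrix ℝ).col v = 0 := by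
  have := congrFun (lapMatrix_mulVec_const_eq_zero (R := ℝ) G) v
  rwa [← (isSymm_lapMatrix (R := ℝ) G).eq, mulVec_transpose] at this

theorem card_mul_degree_div_mem_rayleighQuotients (hV : 1 < Fintype.card V) (v : V) :
    Fintype.card V * G.degree v / (Fintype.card V - 1 : ℝ) ∈ G.rayleighQuotients := by
  have hn : (1 : ℝ) < Fintype.card V := by exact_mod_cast hV
  set n : ℝ := ((Fintype.card V : ℕ) : ℝ) with hn_def
  refine ⟨n • Pi.single v 1 - fun _ => 1, fun h => ?_, ?_, ?_⟩
  · have := congrFun h v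
    simp only [Pi.sub_apply, Pi.smul_apply, Pi.single_eq_same, smul_eq_mul, mul_one,
      Pi.zero_apply, sub_eq_zero] at this
    linarith
  · simp only [Pi.sub_apply, Pi.smul_apply, smul_eq_mul, sum_sub_distrib, ← mul_sum,
      sum_pi_single', sum_const, card_univ]
    simp [hn_def]
  · have hquad : (n • Pi.single v 1 - fun _ => 1) ⬝ᵥ G.lapMatrix ℝ *ᵥ
        (n • Pi.single v 1 - fun _ => 1) = n ^ 2 * G.degree v := by
      rw [mulVec_sub, lapMatrix_mulVec_const_eq_zero, sub_zero, mulVec_smul, mulVec_single_one,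
        dotProduct_smul, sub_dotProduct, smul_dotProduct, single_one_dotProduct,
        one_dotProduct_lapMatrix_col, col_apply, lapMatrix_apply_self, smul_eq_mul]
      ring
    have hnorm : (n • Pi.single v 1 - fun _ => 1) ⬝ᵥ (n • Pi.single v 1 - fun _ => 1) =
        n * (n - 1) := by
      simp only [sub_dotProduct, dotProduct_sub, smul_dotProduct, dotProduct_smul,
        single_one_dotProduct, dotProduct_single_one]
      simp [dotProduct, hn_def]
    rw [hquad, hnorm]
    field_simp

theorem rayleighQuotients_nonempty (hV : 1 < Fintype.card V) : G.rayleighQuotients.Nonempty :=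
  have : Nonempty V := Fintype.card_pos_iff.mp (by omega)
  ⟨_, G.card_mul_degree_div_mem_rayleighQuotients hV (Classical.arbitrary V)⟩

theorem algConn_le_card_mul_minDegree_div (hV : 1 < Fintype.card V) :
    algConn G ≤ Fintype.card V * G.minDegree / (Fintype.card V - 1 : ℝ) := by
  have : Nonempty V := Fintype.card_pos_iff.mp (by omega)
  obtain ⟨v, hv⟩ := G.exists_minimal_degree_vertex
  rw [algConn_eq_sInf_rayleighQuotients, hv]
  exact csInf_le G.rayleighQuotients_bddBelow (G.card_mul_degree_div_mem_rayleighQuotients hV v)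

theorem le_algConn_of_forall_sum_eq_zero (hV : 1 < Fintype.card V) {c : ℝ}
    (hc : ∀ x : V → ℝ, ∑ v, x v = 0 → c * (x ⬝ᵥ x) ≤ x ⬝ᵥ G.lapMatrix ℝ *ᵥ x) :
    c ≤ algConn G := by
  rw [algConn_eq_sInf_rayleighQuotients]
  refine le_csInf (G.rayleighQuotients_nonempty hV) ?_
  rintro _ ⟨x, hx, hsum, rfl⟩
  have hpos : 0 < x ⬝ᵥ x :=
    lt_of_le_of_ne (dotProduct_self_star_nonneg x) (Ne.symm (dotProduct_self_eq_zero.not.mpr hx))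
  rw [le_div_iff₀ hpos]
  exact hc x hsum

theorem card_sub_mul_dotProduct_le_of_adj_iff {κ : Type*} [Fintype κ] [DecidableEq κ]
    (c : V → κ) (hG : ∀ u v, G.Adj u v ↔ c u ≠ c v) {M : ℕ} (hM : ∀ k, #{v | c v = k} ≤ M)
    {x : V → ℝ} (hx : ∑ v, x v = 0) :
    (Fintype.card V - M : ℝ) * (x ⬝ᵥ x) ≤ x ⬝ᵥ G.lapMatrix ℝ *ᵥ x := by
  have hnorm : x ⬝ᵥ x = ∑ v, x v ^ 2 := by simp [dotProduct, sq]
  have hsplit : (∑ i, ∑ j, if G.Adj i j then (x i - x j) ^ 2 else 0) =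
      ∑ i, ∑ j, (x i - x j) ^ 2 - ∑ i, ∑ j, if c i = c j then (x i - x j) ^ 2 else 0 := by
    simp only [← sum_sub_distrib, hG]
    refine sum_congr rfl fun i _ => sum_congr rfl fun j _ => ?_
    split_ifs <;> simp_all
  have hall : ∑ i, ∑ j, (x i - x j) ^ 2 = 2 * Fintype.card V * ∑ v, x v ^ 2 := by
    rw [sum_sum_sub_sq, hx, card_univ]
    ring
  have hparts : ∑ k, ∑ i with c i = k, ∑ j with c j = k, (x i - x j) ^ 2 ≤
      2 * M * ∑ v, x v ^ 2 := by
    calc ∑ k, ∑ i with c i = k, ∑ j with c j = k, (x i - x j) ^ 2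
        ≤ ∑ k, 2 * M * ∑ i with c i = k, x i ^ 2 := by
          refine sum_le_sum fun k _ => ?_
          rw [sum_sum_sub_sq]
          have : (#{v | c v = k} : ℝ) ≤ M := by exact_mod_cast hM k
          nlinarith [sum_nonneg fun i (_ : i ∈ ({v | c v = k} : Finset V)) => sq_nonneg (x i),
            sq_nonneg (∑ i with c i = k, x i)]
      _ = 2 * M * ∑ v, x v ^ 2 := by rw [← mul_sum, sum_fiberwise]
  rw [dotProduct_lapMatrix_mulVec, hsplit, hall, sum_sum_ite_eq_sum_fiberwise, hnorm]
  linarith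

end RayleighQuotient

def turanGraph.coloring {n r : ℕ} (hr : 0 < r) : (turanGraph n r).Coloring (Fin r) :=
  Coloring.mk (fun v => ⟨v % r, Nat.mod_lt _ hr⟩) fun h => Fin.ne_of_val_ne h

@[simp]
theorem turanGraph.coloring_apply {n r : ℕ} (hr : 0 < r) (v : Fin n) :
    turanGraph.coloring hr v = ⟨v % r, Nat.mod_lt _ hr⟩ :=
  rfl

theorem isEmpty_hom_turanGraph {W : Type*} {H : SimpleGraph W} {n r : ℕ} (hr : 0 < r)
    (hH : r < H.chromaticNumber) : IsEmpty (H →g turanGraph n r) :=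
  ⟨fun f => hH.not_ge (Colorable.of_hom f ⟨turanGraph.coloring hr⟩).chromaticNumber_le⟩

theorem le_algConn_turanGraph {n r : ℕ} (hn : 2 ≤ n) (hr : 0 < r) :
    (1 - 1 / r) * n - 1 ≤ algConn (turanGraph n r) := by
  have hbound : (n : ℝ) - (n / r + 1 : ℕ) ≤ algConn (turanGraph n r) := by
    refine le_algConn_of_forall_sum_eq_zero _ (by rw [Fintype.card_fin]; omega) fun x hx => ?_
    simpa only [Fintype.card_fin] using
      card_sub_mul_dotProduct_le_of_adj_iff (turanGraph n r) (turanGraph.coloring hr)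
        (fun u v => by simp [Fin.ext_iff, turanGraph_adj])
        (fun k => by simpa [Fin.ext_iff] using Fin.card_filter_val_mod_eq_le n r k) hx
  have hdiv : ((n / r : ℕ) : ℝ) ≤ n / r := Nat.cast_div_le
  push_cast at hbound
  have : (1 - 1 / r : ℝ) * n = n - n / r := by ring
  linarith

theorem eventually_minDegree_lt_of_free {W : Type*} [Fintype W] {H : SimpleGraph W} {r : ℕ}
    (hH : H.Colorable (r + 1)) {ε : ℝ} (hε : 0 < ε) :
    ∀ᶠ n in atTop, ∀ (G : SimpleGraph (Fin n)) [DecidableRel G.Adj], H.Free G →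
      (G.minDegree : ℝ) < (1 - 1 / r + ε) * n := by
  obtain ⟨C⟩ := hH
  have hK : H ⊑ completeEquipartiteGraph (r + 1) (Fintype.card W) :=
    isContained_completeEquipartiteGraph_of_colorable C _ fun _ => Fintype.card_subtype_le _
  filter_upwards [eventually_completeEquipartiteGraph_isContained_of_minDegree hε r
    (Fintype.card W)] with n hn G _ hfree
  exact lt_of_not_ge fun h => hfree (hK.trans (hn h))

theorem eventually_algConn_le_of_free {W : Type*} [Fintype W] {H : SimpleGraph W} {r : ℕ}
    (hH : H.Colorable (r + 1)) {b : ℝ} (hb : 1 - 1 / r < b) :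
    ∀ᶠ n in atTop, ∀ G : SimpleGraph (Fin n), H.Free G → algConn G ≤ b * n := by
  set ε := (b - (1 - 1 / r)) / 2
  have hε : 0 < ε := by simp only [ε]; linarith
  filter_upwards [eventually_minDegree_lt_of_free hH hε, eventually_ge_atTop 2,
    eventually_ge_atTop ⌈b / ε⌉₊] with n hdeg hn2 hnb G hfree
  classical
  have hn : (2 : ℝ) ≤ n := by exact_mod_cast hn2
  have hεn : b ≤ ε * n := by
    rw [← div_le_iff₀' hε]
    exact (Nat.le_ceil _).trans (by exact_mod_cast hnb)
  calc algConn G ≤ n * G.minDegree / (n - 1 : ℝ) := by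
        simpa using G.algConn_le_card_mul_minDegree_div (by rw [Fintype.card_fin]; omega)
    _ ≤ n * ((1 - 1 / r + ε) * n) / (n - 1) := by
        gcongr
        · linarith
        · exact (hdeg G hfree).le
    _ ≤ b * n := by
        rw [div_le_iff₀ (by linarith)]
        simp only [ε] at hεn ⊢
        nlinarith

end SimpleGraph

theorem stmt15 {ι : Type} (V : ι → Type) [∀ i, Fintype (V i)]
    (H : (i : ι) → SimpleGraph (V i)) (r : ℕ) (hr : 2 ≤ r)
    (hlb : ∀ i, ((r : ℕ∞) + 1) ≤ (H i).chromaticNumber)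
    (hmin : ∃ i, (H i).chromaticNumber = (r : ℕ∞) + 1) :
    Filter.Tendsto
      (fun n : ℕ =>
        sSup { a : ℝ | ∃ G : SimpleGraph (Fin n),
          (∀ i, ¬ ∃ f : H i →g G, Function.Injective f) ∧ a = algConn G } / (n : ℝ))
      Filter.atTop (nhds (1 - 1 / (r : ℝ))) := by
  obtain ⟨i₀, hi₀⟩ := hmin
  have hr₀ : 0 < r := by omega
  refine tendsto_sSup_div_atTop (C := 1) ?_ fun b hb => ?_
  · filter_upwards [eventually_ge_atTop 2] with n hn
    refine ⟨_, ⟨turanGraph n r, fun i ⟨f, _⟩ => ?_, rfl⟩, le_algConn_turanGraph hn hr₀⟩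
    exact (isEmpty_hom_turanGraph hr₀ ((ENat.add_one_le_iff (ENat.natCast_ne_top r)).mp
      (hlb i))).false f
  · have hcol : (H i₀).Colorable (r + 1) :=
      chromaticNumber_le_iff_colorable.mp (by rw [hi₀]; norm_cast)
    filter_upwards [eventually_algConn_le_of_free hcol hb] with n hn
    rintro _ ⟨G, hG, rfl⟩
    exact hn G fun ⟨f⟩ => hG i₀ ⟨f.toHom, f.injective⟩
end

section
/- Let G be a graph on n vertices not containing K_{r+1} with n = kr + t, 0 < t < r, and α(G) = n - (k+1). Then the minimum degree of G equals n - k - 1, and the set U of vertices of minimum degree has size at least t(k+1), and moreover α(G) = κ(G) = δ(G) = n - k - 1. -/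
open SimpleGraph Matrix BigOperators

/-- The vertex connectivity of `G` : the least size of a set of vertices whose removal
leaves a graph that is not connected. -/
noncomputable def vertConn {V : Type*} [Fintype V] [DecidableEq V] (G : SimpleGraph V) : ℕ :=
  sInf { m : ℕ | ∃ S : Finset V, S.card = m ∧
    ¬ (G.induce (↑(Sᶜ) : Set V)).Connected }

/-!
Turán's theorem bounds the degree sum of a `K_{r+1}`-free graph on `n = kr + t` vertices by
`n(n - k) - t(k + 1)`. Comparing with `n δ(G)` forces `δ(G) ≤ n - k - 1`, and Fiedler's
inequalities `α(G) ≤ κ(G) ≤ δ(G)` then squeeze all three onto `α(G) = n - k - 1`. Once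
`δ(G) = n - k - 1`, each vertex of larger degree eats one unit of the slack `n - t(k + 1)`
left by Turán's bound, so at least `t(k + 1)` vertices have minimum degree.
-/

open Finset

namespace SimpleGraph

variable {V : Type*} [Fintype V] {G : SimpleGraph V}

section Degrees

variable [DecidableRel G.Adj]

theorem CliqueFree.two_mul_card_edgeFinset_add_le {k r t : ℕ} (hG : G.CliqueFree (r + 1))
    (hV : Fintype.card V = k * r + t) (ht : t < r) :
    2 * #G.edgeFinset + (Fintype.card V * k + t * (k + 1)) ≤ Fintype.card V ^ 2 := by
  have hr : 0 < r := by omega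
  have hmod : (k * r + t) % r = t := by rw [Nat.mul_add_mod_self_right, Nat.mod_eq_of_lt ht]
  have hsq : (k * r + t) ^ 2 - t ^ 2 = r * (k * (k * r + 2 * t)) :=
    Nat.sub_eq_of_eq_add (by ring)
  -- Mathlib's bound reads `(n² - t²)(r - 1) / 2r + C(t, 2)`, and `n² - t² = r · k(kr + 2t)`.
  have hturan := hG.card_edgeFinset_le
  simp only [hV, hmod, hsq] at hturan
  rw [mul_comm 2 r, mul_assoc, Nat.mul_div_mul_left _ _ hr] at hturan
  have hchoose : 2 * t.choose 2 ≤ t * (t - 1) := by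
    rw [Nat.choose_two_right]; exact Nat.mul_div_le _ _
  have hhalf := Nat.mul_div_le (k * (k * r + 2 * t) * (r - 1)) 2
  have hsum : k * (k * r + 2 * t) * (r - 1) + t * (t - 1) + ((k * r + t) * k + t * (k + 1))
      = (k * r + t) ^ 2 := by
    obtain ⟨r, rfl⟩ : ∃ r', r = r' + 1 := ⟨r - 1, by omega⟩
    rcases t with _ | t <;> simp only [add_tsub_cancel_right] <;> ring
  rw [hV]
  omega

theorem card_mul_minDegree_add_card_filter_ne_le_sum_degrees :
    Fintype.card V * G.minDegree + #{v | G.degree v ≠ G.minDegree} ≤ ∑ v, G.degree v := by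
  rw [card_filter, ← card_univ, ← smul_eq_mul, ← sum_const, ← sum_add_distrib]
  refine sum_le_sum fun v _ => ?_
  have := G.minDegree_le_degree v
  split_ifs <;> omega

end Degrees

section Connectivity

variable [DecidableEq V]

theorem exists_card_eq_vertConn :
    ∃ S : Finset V, #S = vertConn G ∧ ¬ (G.induce (↑Sᶜ : Set V)).Connected := by
  refine Nat.sInf_mem (s := {m | ∃ S : Finset V, #S = m ∧ ¬ (G.induce (↑Sᶜ : Set V)).Connected})
    ⟨_, univ, rfl, fun h => ?_⟩
  obtain ⟨v, hv⟩ := h.nonempty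
  simp at hv

theorem vertConn_le_minDegree [DecidableRel G.Adj] (h : G.minDegree + 2 ≤ Fintype.card V) :
    vertConn G ≤ G.minDegree := by
  have : Nonempty V := Fintype.card_pos_iff.mp (by omega)
  obtain ⟨v, hv⟩ := G.exists_minimal_degree_vertex
  rw [hv] at h ⊢
  refine Nat.sInf_le ⟨G.neighborFinset v, G.card_neighborFinset_eq_degree v, fun hconn => ?_⟩
  have hvN : v ∈ (G.neighborFinset v)ᶜ := by simp
  obtain ⟨w, hw, hwv⟩ := exists_mem_ne (s := (G.neighborFinset v)ᶜ)
    (by rw [card_compl, card_neighborFinset_eq_degree]; omega) v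
  -- `v` is isolated once its neighbourhood is removed, yet must reach `w ≠ v`.
  obtain ⟨⟨z, hz⟩, hvz⟩ := (hconn.preconnected ⟨v, mem_coe.mpr hvN⟩
    ⟨w, mem_coe.mpr hw⟩).nonempty_neighborSet_left (by simpa using hwv.symm)
  exact mem_compl.mp (mem_coe.mp hz) (G.mem_neighborFinset v z |>.mpr hvz)

end Connectivity

section Fiedler

variable [DecidableEq V] [DecidableRel G.Adj]

theorem dotProduct_lapMatrix_mulVec_le {x : V → ℝ} {S : Finset V} (hS : ∀ v ∈ S, x v = 0)
    (hx : ∀ i j, G.Adj i j → i ∉ S → j ∉ S → x i = x j) :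
    x ⬝ᵥ G.lapMatrix ℝ *ᵥ x ≤ #S * (x ⬝ᵥ x) := by
  -- An edge meeting `S` contributes the square at its other end; one avoiding `S` contributes 0.
  have hedge : ∀ i j, (if G.Adj i j then (x i - x j) ^ 2 else 0)
      ≤ (if j ∈ S then x i ^ 2 else 0) + (if i ∈ S then x j ^ 2 else 0) := by
    intro i j
    by_cases hij : G.Adj i j
    · by_cases hi : i ∈ S <;> by_cases hj : j ∈ S
      all_goals simp [hij, hi, hj, hS, hx i j hij]
    · simp only [hij, if_false]
      positivity
  rw [← toLinearMap₂'_apply', lapMatrix_toLinearMap₂', div_le_iff₀ two_pos]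
  calc ∑ i, ∑ j, (if G.Adj i j then (x i - x j) ^ 2 else 0)
      ≤ ∑ i, ∑ j, ((if j ∈ S then x i ^ 2 else 0) + (if i ∈ S then x j ^ 2 else 0)) :=
        sum_le_sum fun i _ => sum_le_sum fun j _ => hedge i j
    _ = #S * (x ⬝ᵥ x) * 2 := by
        simp only [sum_add_distrib]
        rw [sum_comm (f := fun i j => if i ∈ S then x j ^ 2 else 0)]
        simp only [sum_ite_mem, univ_inter, sum_const, nsmul_eq_mul, ← mul_sum, dotProduct, sq]
        ring

theorem algConn_le_dotProduct_div {x : V → ℝ} (hx : x ≠ 0) (hsum : ∑ v, x v = 0) :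
    algConn G ≤ (x ⬝ᵥ G.lapMatrix ℝ *ᵥ x) / (x ⬝ᵥ x) := by
  have hlap : @lapMatrix V ℝ _ G (Classical.decRel G.Adj) (Classical.decEq V) _ =
      G.lapMatrix ℝ := by
    congr!
  unfold algConn
  refine csInf_le ⟨0, ?_⟩ ⟨x, hx, hsum, by rw [hlap]⟩
  rintro _ ⟨y, -, -, rfl⟩
  rw [hlap]
  have := (posSemidef_lapMatrix ℝ G).dotProduct_mulVec_nonneg y
  simp only [star_trivial] at this
  exact div_nonneg this (by simpa using dotProduct_self_star_nonneg y)

theorem algConn_le_card_of_not_preconnected {S : Finset V}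
    (hS : ¬ (G.induce (↑Sᶜ : Set V)).Preconnected) : algConn G ≤ #S := by
  obtain ⟨a, b, hab⟩ : ∃ a b, ¬ (G.induce (↑Sᶜ : Set V)).Reachable a b := by
    simpa [Preconnected] using hS
  let P : V → Prop := fun v => ∃ hv : v ∈ (↑Sᶜ : Set V), (G.induce _).Reachable a ⟨v, hv⟩
  have hP_of_adj : ∀ i j, G.Adj i j → j ∉ S → P i → P j := fun i j hij hj ⟨hi, hr⟩ =>
    ⟨by simpa using hj, hr.trans (Adj.reachable (G := G.induce _) (v := ⟨j, _⟩) hij)⟩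
  have hP : ∀ i j, G.Adj i j → i ∉ S → j ∉ S → (P i ↔ P j) := fun i j hij hi hj =>
    ⟨hP_of_adj i j hij hj, hP_of_adj j i hij.symm hi⟩
  let ca : ℝ := #(Sᶜ.filter P)
  let cb : ℝ := #(Sᶜ.filter (¬ P ·))
  have hca : 0 < ca := by
    have : a.1 ∈ Sᶜ.filter P := mem_filter.mpr ⟨mem_coe.mp a.2, a.2, Reachable.refl _⟩
    exact Nat.cast_pos.mpr (card_pos.mpr ⟨_, this⟩)
  have hcb : 0 < cb := by
    have : b.1 ∈ Sᶜ.filter (¬ P ·) := mem_filter.mpr ⟨mem_coe.mp b.2, fun ⟨_, h⟩ => hab h⟩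
    exact Nat.cast_pos.mpr (card_pos.mpr ⟨_, this⟩)
  let x : V → ℝ := fun v => if v ∈ Sᶜ then (if P v then cb else -ca) else 0
  have hx : x ≠ 0 := fun h => by
    have := congrFun h a
    simp only [x, if_pos (mem_coe.mp a.2), if_pos (show P a from ⟨a.2, Reachable.refl _⟩)] at this
    exact hcb.ne' this
  have hsum : ∑ v, x v = 0 := by
    simp only [x, sum_ite_mem, univ_inter]
    rw [sum_ite, sum_const, sum_const, nsmul_eq_mul, nsmul_eq_mul]
    ring
  have hq : x ⬝ᵥ G.lapMatrix ℝ *ᵥ x ≤ #S * (x ⬝ᵥ x) :=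
    dotProduct_lapMatrix_mulVec_le (fun v hv => if_neg (notMem_compl.mpr hv))
      fun i j hij hi hj => by
        simp only [x, if_pos (mem_compl.mpr hi), if_pos (mem_compl.mpr hj), hP i j hij hi hj]
  calc algConn G ≤ (x ⬝ᵥ G.lapMatrix ℝ *ᵥ x) / (x ⬝ᵥ x) := algConn_le_dotProduct_div hx hsum
    _ ≤ #S := div_le_of_le_mul₀ (by simpa using dotProduct_self_star_nonneg x) (by positivity) hq

theorem algConn_le_vertConn (h : vertConn G < Fintype.card V) : algConn G ≤ vertConn G := by
  obtain ⟨S, hS, hdis⟩ := G.exists_card_eq_vertConn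
  rw [← hS]
  refine algConn_le_card_of_not_preconnected fun hpre => hdis ?_
  obtain ⟨v, hv⟩ : (Sᶜ).Nonempty := card_pos.mp (by rw [card_compl]; omega)
  exact (connected_iff _).mpr ⟨hpre, ⟨v, mem_coe.mpr hv⟩⟩

end Fiedler

end SimpleGraph

theorem stmt18 {n r k t : ℕ} (hk : 1 ≤ k) (hn : n = k * r + t) (ht0 : 0 < t)
    (ht : t < r) (G : SimpleGraph (Fin n)) [DecidableRel G.Adj]
    (hfree : G.CliqueFree (r + 1))
    (hα : algConn G = (n : ℝ) - ((k : ℝ) + 1)) :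
    G.minDegree = n - (k + 1) ∧
      t * (k + 1) ≤ (Finset.univ.filter (fun v => G.degree v = G.minDegree)).card ∧
      (vertConn G : ℝ) = algConn G ∧ (G.minDegree : ℝ) = algConn G := by
  have hturan := hfree.two_mul_card_edgeFinset_add_le (by rw [Fintype.card_fin, hn]) ht
  have hcount := G.card_mul_minDegree_add_card_filter_ne_le_sum_degrees
  rw [sum_degrees_eq_twice_card_edges] at hcount
  simp only [Fintype.card_fin] at hturan hcount
  have hδ : G.minDegree + (k + 1) ≤ n := by
    by_contra! h
    nlinarith [Nat.mul_le_mul_left n (show n ≤ G.minDegree + k by omega)]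
  have hκδ := G.vertConn_le_minDegree (by rw [Fintype.card_fin]; omega)
  have hακ := G.algConn_le_vertConn (by rw [Fintype.card_fin]; omega)
  have hκδ' : (vertConn G : ℝ) ≤ G.minDegree := by exact_mod_cast hκδ
  have hδα : (G.minDegree : ℝ) ≤ algConn G := by
    have : (G.minDegree : ℝ) + (k + 1) ≤ n := by exact_mod_cast hδ
    linarith
  have hδ_eq : G.minDegree + (k + 1) = n := by
    have : (G.minDegree : ℝ) + (k + 1) = n := by linarith
    exact_mod_cast this
  refine ⟨by omega, ?_, by linarith, by linarith⟩
  have hsplit : #{v | G.degree v = G.minDegree} + #{v | G.degree v ≠ G.minDegree} = n :=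
    (card_filter_add_card_filter_not _).trans (by simp)
  have hsq : n * G.minDegree + n * k + n = n ^ 2 :=
    calc _ = n * (G.minDegree + (k + 1)) := by ring
      _ = n ^ 2 := by rw [hδ_eq, sq]
  omega
end
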